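/- arXiv:math/0311203 — 3 statements merged into one kernel-verified Lean document; each statement's English description precedes it below -/
import Mathlib

section
/- Let w = (w_1,...,w_n) be a minimal lace diagram with rank conditions r, and suppose a transformation is allowed at (i,j) (i.e., 1 <= i <= n-1, 1 <= j < e_i, and exactly one of w_i(j) > w_i(j+1), w_{i+1}^{-1}(j) > w_{i+1}^{-1}(j+1) holds). Then w' = (w_1,...,w_{i-1}, w_i s_j, s_j w_{i+1}, w_{i+2},...,w_n) is again a minimal lace diagram with rank conditions r. -/
open MvPolynomial

/-! Common setup.  Dots in columns, positions in permutations, and variable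
indices are all 0-indexed: dot `q` (0-indexed) of column `i` is dot `q+1`
(1-indexed) in the paper, the variable `(i, j) : ℕ × ℕ` is the Chern root
`x^i_{j+1}`, and in the Schubert variable type `ℕ ⊕ ℕ`, `Sum.inl a` is
`x_{a+1}` and `Sum.inr b` is `y_{b+1}`. -/

/-- Coxeter length = number of inversions of a (finitely supported) permutation of ℕ. -/
noncomputable def ell (w : Equiv.Perm ℕ) : ℕ :=
  {p : ℕ × ℕ | p.1 < p.2 ∧ w p.2 < w p.1}.ncard

/-- A finitely supported permutation of ℕ. -/
def FinSupp (w : Equiv.Perm ℕ) : Prop := {x | w x ≠ x}.Finite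

/-- A lace diagram for the dimension vector `e 0, …, e n`, encoded as a sequence
`w 1, …, w n` of finitely supported permutations of ℕ (normalized so that
`w i = 1` outside `1 ≤ i ≤ n`): all descent positions of `w i` are `< e i` and
all descent positions of `(w i)⁻¹` are `< e (i-1)` (0-indexed positions). -/
def IsLace (n : ℕ) (e : ℕ → ℕ) (w : ℕ → Equiv.Perm ℕ) : Prop :=
  (∀ i, i = 0 ∨ n < i → w i = 1) ∧
  ∀ i, 1 ≤ i → i ≤ n → FinSupp (w i) ∧
    (∀ k, w i (k + 1) < w i k → k < e i) ∧
    (∀ k, (w i)⁻¹ (k + 1) < (w i)⁻¹ k → k < e (i - 1))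

/-- `chain w i k p = (w k)⁻¹ (⋯ ((w (i+1))⁻¹ p))` for `k ≥ i`, and `p` for `k ≤ i`. -/
def chain (w : ℕ → Equiv.Perm ℕ) (i : ℕ) : ℕ → ℕ → ℕ
  | 0, p => p
  | k + 1, p => if k + 1 ≤ i then p else (w (k + 1))⁻¹ (chain w i k p)

/-- The rank conditions of a lace diagram: `rank e w i j` is the number of dots
`p < e i` of column `i` whose strand continues through column `j`. -/
noncomputable def rank (e : ℕ → ℕ) (w : ℕ → Equiv.Perm ℕ) (i j : ℕ) : ℕ :=
  {p : ℕ | p < e i ∧ ∀ k, i < k → k ≤ j → chain w i k p < e k}.ncard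

/-- The lace diagram `w` has rank conditions `r` (for `0 ≤ i ≤ j ≤ n`). -/
def RankEq (n : ℕ) (e : ℕ → ℕ) (w : ℕ → Equiv.Perm ℕ) (r : ℕ → ℕ → ℕ) : Prop :=
  ∀ i j, i ≤ j → j ≤ n → rank e w i j = r i j

/-- The length of a lace diagram. -/
noncomputable def diagLength (n : ℕ) (w : ℕ → Equiv.Perm ℕ) : ℕ :=
  ∑ i ∈ Finset.Icc 1 n, ell (w i)

/-- The expected codimension `d(r)`. -/
def codim (n : ℕ) (r : ℕ → ℕ → ℕ) : ℕ :=
  ∑ i ∈ Finset.range (n + 1), ∑ j ∈ Finset.range (n + 1),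
    if i < j then (r i (j - 1) - r i j) * (r (i + 1) j - r i j) else 0

/-- A minimal lace diagram: its length equals the expected codimension of its
rank conditions. -/
def IsMinimal (n : ℕ) (e : ℕ → ℕ) (w : ℕ → Equiv.Perm ℕ) : Prop :=
  IsLace n e w ∧ diagLength n w = codim n (rank e w)

/-- The longest element of `S m` (0-indexed), as a permutation of ℕ. -/
def longest (m : ℕ) : Equiv.Perm ℕ where
  toFun i := if i < m then m - 1 - i else i
  invFun i := if i < m then m - 1 - i else i
  left_inv i := by dsimp only; split_ifs <;> omega
  right_inv i := by dsimp only; split_ifs <;> omega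

/-- Interchanging the x-variables `x (i+1)` and `x (i+2)` (0-indexed: `inl i`
and `inl (i+1)`). -/
noncomputable def sX (i : ℕ) (f : MvPolynomial (ℕ ⊕ ℕ) ℤ) : MvPolynomial (ℕ ⊕ ℕ) ℤ :=
  rename (Sum.map (Equiv.swap i (i + 1)) id) f

/-- `S` is the family of double Schubert polynomials `S w = 𝔖_w(x; y)`:
it takes the prescribed product value on each longest element, it satisfies the
divided difference recursion `(x i - x (i+1)) * S (w * s i) = S w - (S w)^{s i}`
when `w` has a descent at `i` and `(S w)^{s i} = S w` otherwise, and only the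
variables up to the last descents of `w` and `w⁻¹` occur in `S w`. -/
def IsSchubertFamily (S : Equiv.Perm ℕ → MvPolynomial (ℕ ⊕ ℕ) ℤ) : Prop :=
  (∀ m : ℕ, S (longest m) =
      ∏ i ∈ Finset.range m, ∏ j ∈ Finset.range m,
        if i + j + 2 ≤ m then X (Sum.inl i) - X (Sum.inr j) else 1) ∧
  (∀ w : Equiv.Perm ℕ, FinSupp w → ∀ i : ℕ,
    (w (i + 1) < w i →
      (X (Sum.inl i) - X (Sum.inl (i + 1))) * S (w * Equiv.swap i (i + 1)) =
        S w - sX i (S w)) ∧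
    (w i < w (i + 1) → sX i (S w) = S w)) ∧
  (∀ w : Equiv.Perm ℕ, FinSupp w → ∀ k l : ℕ,
    (∀ t, k ≤ t → ¬w (t + 1) < w t) → (∀ t, l ≤ t → ¬w⁻¹ (t + 1) < w⁻¹ t) →
    ∀ v ∈ (S w).vars, (∃ a < k, v = Sum.inl a) ∨ (∃ b < l, v = Sum.inr b))

/-- The product `S(w) = 𝔖_{w 1}(x^1;x^0) ⋯ 𝔖_{w n}(x^n;x^{n-1})`, in the
variables `(i, j) = x^i_{j+1}`. -/
noncomputable def Sprod (n : ℕ) (S : Equiv.Perm ℕ → MvPolynomial (ℕ ⊕ ℕ) ℤ)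
    (w : ℕ → Equiv.Perm ℕ) : MvPolynomial (ℕ × ℕ) ℤ :=
  ∏ i ∈ Finset.Icc 1 n,
    rename (Sum.elim (fun a => (i, a)) (fun b => (i - 1, b))) (S (w i))

/-- The component-formula polynomial `Q_r`: the sum of `Sprod n S w` over all
minimal lace diagrams `w` with rank conditions `r`. -/
noncomputable def Qpoly (n : ℕ) (e : ℕ → ℕ) (r : ℕ → ℕ → ℕ)
    (S : Equiv.Perm ℕ → MvPolynomial (ℕ ⊕ ℕ) ℤ) : MvPolynomial (ℕ × ℕ) ℤ :=
  ∑ᶠ (w : ℕ → Equiv.Perm ℕ) (_ : IsMinimal n e w ∧ RankEq n e w r), Sprod n S w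

/-- The shifted permutation `1^k × w`: fixes `0, …, k-1` (0-indexed) and sends
`k + j` to `k + w j`. -/
def shiftPerm (k : ℕ) (w : Equiv.Perm ℕ) : Equiv.Perm ℕ where
  toFun j := if j < k then j else w (j - k) + k
  invFun j := if j < k then j else w⁻¹ (j - k) + k
  left_inv j := by
    dsimp only
    by_cases h : j < k
    · simp [h]
    · have h1 : ¬ w (j - k) + k < k := by omega
      simp only [if_neg h, if_neg h1, Nat.add_sub_cancel, ← Equiv.Perm.mul_apply, inv_mul_cancel,
        Equiv.Perm.one_apply]
      omega
  right_inv j := by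
    dsimp only
    by_cases h : j < k
    · simp [h]
    · have h1 : ¬ w⁻¹ (j - k) + k < k := by omega
      simp only [if_neg h, if_neg h1, Nat.add_sub_cancel, ← Equiv.Perm.mul_apply, mul_inv_cancel,
        Equiv.Perm.one_apply]
      omega

/-- The lace diagram `(1^k × w 1, …, 1^k × w n)`. -/
def shiftDiag (k : ℕ) (w : ℕ → Equiv.Perm ℕ) : ℕ → Equiv.Perm ℕ :=
  fun i => shiftPerm k (w i)

/-- The transformation of lace diagrams, allowed at `(i, j)` (0-indexed `j`,
so `j + 1 < e i`) when exactly one of the two descent conditions holds; it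
replaces `w i` by `w i * s j` and `w (i+1)` by `s j * w (i+1)`. -/
def TransStep (n : ℕ) (e : ℕ → ℕ) (w w' : ℕ → Equiv.Perm ℕ) : Prop :=
  IsLace n e w ∧ ∃ i j, 1 ≤ i ∧ i + 1 ≤ n ∧ j + 1 < e i ∧
    Xor' (w i (j + 1) < w i j) ((w (i + 1))⁻¹ (j + 1) < (w (i + 1))⁻¹ j) ∧
    w' = Function.update (Function.update w i (w i * Equiv.swap j (j + 1))) (i + 1)
          (Equiv.swap j (j + 1) * w (i + 1))

/-- The column where the strand through dot `q` of column `c` starts. -/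
def startCol (e : ℕ → ℕ) (w : ℕ → Equiv.Perm ℕ) : ℕ → ℕ → ℕ
  | 0, _ => 0
  | c + 1, q => if w (c + 1) q < e c then startCol e w c (w (c + 1) q) else c + 1

/-- The starting dot `(column, position)` of the strand through dot `q` of column `c`. -/
def startDot (e : ℕ → ℕ) (w : ℕ → Equiv.Perm ℕ) : ℕ → ℕ → ℕ × ℕ
  | 0, q => (0, q)
  | c + 1, q => if w (c + 1) q < e c then startDot e w c (w (c + 1) q) else (c + 1, q)

def endColAux (e : ℕ → ℕ) (w : ℕ → Equiv.Perm ℕ) : ℕ → ℕ → ℕ → ℕ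
  | 0, c, _ => c
  | f + 1, c, q =>
      if (w (c + 1))⁻¹ q < e (c + 1) then endColAux e w f (c + 1) ((w (c + 1))⁻¹ q) else c

/-- The column where the strand through dot `q` of column `c` terminates. -/
def endCol (n : ℕ) (e : ℕ → ℕ) (w : ℕ → Equiv.Perm ℕ) (c q : ℕ) : ℕ :=
  endColAux e w (n - c) c q

/-- `w` is the left-most lace diagram (for its rank conditions): it is a lace
diagram such that in every column the strands are sorted from top to bottom by
starting column (ascending) and then by terminating column (descending), exactly
as produced by the construction which adds, for `i = 0, …, n` and `j = n, …, i`,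
all strands from column `i` to column `j` to the bottom of the diagram; and
strands with the same start and end do not cross. -/
def IsLeftmost (n : ℕ) (e : ℕ → ℕ) (w : ℕ → Equiv.Perm ℕ) : Prop :=
  IsLace n e w ∧
  (∀ c, c ≤ n → ∀ q q', q < q' → q' < e c →
    startCol e w c q < startCol e w c q' ∨
      (startCol e w c q = startCol e w c q' ∧ endCol n e w c q' ≤ endCol n e w c q)) ∧
  (∀ c, 1 ≤ c → c ≤ n → ∀ q q', q < q' → q' < e c →
    startCol e w c q = startCol e w c q' → endCol n e w c q = endCol n e w c q' →
    w c q < w c q')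

/-- The substitution homomorphism `φ_u` of a lace diagram `u`: it sends the
variable `x^i_j` to the variable `b_S` of the strand `S` of `u` through dot
`(i, j)`, where the strand variables are realized as the variables indexed by
the starting dots of strands. -/
noncomputable def phiMap (e : ℕ → ℕ) (u : ℕ → Equiv.Perm ℕ) :
    MvPolynomial (ℕ × ℕ) ℤ →ₐ[ℤ] MvPolynomial (ℕ × ℕ) ℤ :=
  rename fun p => startDot e u p.1 p.2

/-- The product of the simple transpositions `s (i+1)` (1-indexed) for `i` in `l`. -/
def wordProd (l : List ℕ) : Equiv.Perm ℕ := (l.map fun i => Equiv.swap i (i + 1)).prod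

/-- A reduced word for a finitely supported permutation of ℕ. -/
def IsReducedWord (u : Equiv.Perm ℕ) (l : List ℕ) : Prop :=
  wordProd l = u ∧ l.length = ell u

/-- Bruhat order: some reduced word for `u` contains a subword which is a
reduced word for `w`. -/
def BruhatLE (w u : Equiv.Perm ℕ) : Prop :=
  ∃ l l', IsReducedWord u l ∧ IsReducedWord w l' ∧ l'.Sublist l

/-!
The transformation relabels the dots `j, j + 1` of column `i` by `s_j`, so it preserves all ranks,
and since exactly one of the two descents is present it shortens one of `w i`, `w (i + 1)` by one
and lengthens the other by one. It remains to see that the result is a lace diagram. The only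
descent condition that can fail forces the dots `j, j + 1` of column `i` to both end there (or both
start there); then undoing their crossing in `w i` alone (or in `w (i + 1)` alone) gives a lace
diagram with the same ranks and smaller length, contradicting minimality via the bound
`d(r) ≤ ℓ(w)`. That bound holds for every lace diagram: `d(r)` counts the pairs of strands
`(σ, τ)` such that `τ` starts after `σ` but no later than one column after `σ` ends, and ends after
`σ`; every such pair must cross, and the first crossing determines the pair.
-/

open Equiv

lemma FinSupp.mul {u v : Perm ℕ} (hu : FinSupp u) (hv : FinSupp v) : FinSupp (u * v) :=
  (hu.union hv).subset (Perm.set_support_mul_subset u v)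

lemma Finset.card_filter_eq_add {α : Type*} {s : Finset α} {P Q R : α → Prop} [DecidablePred P]
    [DecidablePred Q] [DecidablePred R]
    (h : ∀ x ∈ s, P x ↔ Q x ∨ R x) (hQR : ∀ x ∈ s, Q x → ¬R x) :
    (s.filter P).card = (s.filter Q).card + (s.filter R).card := by
  classical
  rw [← Finset.card_union_of_disjoint (Finset.disjoint_filter.2 hQR), ← Finset.filter_or]
  exact congrArg _ (Finset.filter_congr h)

namespace LaceDiagram

section Length

variable {v : Perm ℕ} {j m : ℕ}

def inversions (v : Perm ℕ) : Set (ℕ × ℕ) := {p | p.1 < p.2 ∧ v p.2 < v p.1}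

/-- Past the support, `v` is the identity, so every inversion lies in a bounded square. -/
lemma finite_inversions (hv : FinSupp v) : (inversions v).Finite := by
  obtain ⟨N, hN⟩ := hv.bddAbove
  have hfix : ∀ x, N < x → v x = x := fun x hx => by_contra fun h => absurd (hN h) (by omega)
  have hbdd : ∀ x, x ≤ N → v x ≤ N := fun x hx => by
    by_contra h
    exact absurd (v.injective (hfix (v x) (by omega))) (by omega)
  refine ((Set.finite_Iic N).prod (Set.finite_Iic N)).subset ?_
  rintro ⟨a, b⟩ ⟨hab, hvab⟩
  dsimp only at hab hvab
  by_cases hb : b ≤ N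
  · exact ⟨(by simp only [Set.mem_Iic]; omega), hb⟩
  · rw [hfix b (by omega)] at hvab
    by_cases ha : a ≤ N
    · exact absurd (hbdd a ha) (by omega)
    · rw [hfix a (by omega)] at hvab; omega

lemma finSupp_swap (j : ℕ) : FinSupp (swap j (j + 1)) :=
  (Set.toFinite {j, j + 1}).subset fun x hx => by
    by_contra h
    simp only [Set.mem_insert_iff, Set.mem_singleton_iff, not_or] at h
    exact hx (swap_apply_of_ne_of_ne h.1 h.2)

lemma lt_of_not_descent (h : ¬v (j + 1) < v j) : v j < v (j + 1) :=
  lt_of_le_of_ne (not_lt.1 h) (v.injective.ne (by omega))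

lemma swap_lt_swap {a b : ℕ} (h : a < b) (hne : ¬(a = j ∧ b = j + 1)) :
    swap j (j + 1) a < swap j (j + 1) b := by
  simp only [swap_apply_def]
  split_ifs <;> omega

lemma swap_lt_iff (h : j + 1 < m) {x : ℕ} : swap j (j + 1) x < m ↔ x < m := by
  simp only [swap_apply_def]
  split_ifs <;> omega

lemma inversions_mul_swap (hd : v (j + 1) < v j) :
    inversions (v * swap j (j + 1)) =
      Prod.map (swap j (j + 1)) (swap j (j + 1)) ⁻¹' (inversions v \ {(j, j + 1)}) := by
  ext ⟨a, b⟩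
  simp only [inversions, Set.mem_ofPred_eq, Set.mem_preimage, Prod.map, Set.mem_sdiff,
    Set.mem_singleton_iff, Prod.mk.injEq, Perm.mul_apply]
  constructor
  · rintro ⟨hab, hv⟩
    have hne : ¬(a = j ∧ b = j + 1) := by
      rintro ⟨rfl, rfl⟩
      simp only [swap_apply_left, swap_apply_right] at hv
      omega
    refine ⟨⟨swap_lt_swap hab hne, hv⟩, fun h => ?_⟩
    rw [swap_apply_eq_iff, swap_apply_eq_iff, swap_apply_left, swap_apply_right] at h
    omega
  · rintro ⟨⟨hab, hv⟩, hne⟩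
    refine ⟨?_, hv⟩
    simpa using swap_lt_swap (j := j) hab hne

lemma inversions_swap_mul (hd : v⁻¹ (j + 1) < v⁻¹ j) :
    inversions (swap j (j + 1) * v) = inversions v \ {(v⁻¹ (j + 1), v⁻¹ j)} := by
  ext ⟨a, b⟩
  simp only [inversions, Set.mem_ofPred_eq, Set.mem_sdiff, Set.mem_singleton_iff, Prod.mk.injEq,
    Perm.mul_apply, Perm.eq_inv_iff_eq]
  have hinc : ∀ x y, x < y → ¬(v x = j ∧ v y = j + 1) := by
    rintro x y hxy ⟨hx, hy⟩
    rw [← hy, ← hx] at hd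
    simp only [Perm.inv_def, symm_apply_apply] at hd
    omega
  constructor
  · rintro ⟨hab, hv⟩
    have hne : ¬(v b = j ∧ v a = j + 1) := by
      rintro ⟨hb, ha⟩
      simp only [hb, ha, swap_apply_left, swap_apply_right] at hv
      omega
    refine ⟨⟨hab, ?_⟩, fun h => hne ⟨h.2, h.1⟩⟩
    rcases lt_trichotomy (v b) (v a) with h | h | h
    · exact h
    · exact absurd (v.injective h) hab.ne'
    · exact absurd (swap_lt_swap h (hinc a b hab)) (by omega)
  · rintro ⟨⟨hab, hv⟩, hne⟩
    exact ⟨hab, swap_lt_swap hv fun h => hne ⟨h.2, h.1⟩⟩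

lemma ell_mul_swap_add_one (hv : FinSupp v) (hd : v (j + 1) < v j) :
    ell (v * swap j (j + 1)) + 1 = ell v := by
  show (inversions _).ncard + 1 = (inversions v).ncard
  rw [inversions_mul_swap hd, Set.ncard_preimage_of_injective_subset_range
      (Prod.map_injective.2 ⟨(swap _ _).injective, (swap _ _).injective⟩)
      fun p _ => (Prod.map_surjective.2 ⟨(swap _ _).surjective, (swap _ _).surjective⟩) p]
  exact Set.ncard_sdiff_singleton_add_one ⟨by simp, hd⟩ (finite_inversions hv)

lemma ell_swap_mul_add_one (hv : FinSupp v) (hd : v⁻¹ (j + 1) < v⁻¹ j) :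
    ell (swap j (j + 1) * v) + 1 = ell v := by
  show (inversions _).ncard + 1 = (inversions v).ncard
  rw [inversions_swap_mul hd]
  exact Set.ncard_sdiff_singleton_add_one ⟨hd, by simp⟩ (finite_inversions hv)

lemma ell_mul_swap (hv : FinSupp v) (ha : v j < v (j + 1)) :
    ell (v * swap j (j + 1)) = ell v + 1 := by
  have := ell_mul_swap_add_one (hv.mul (finSupp_swap j)) (j := j) (by simpa using ha)
  rw [mul_swap_mul_self] at this
  exact this.symm

lemma ell_swap_mul (hv : FinSupp v) (ha : v⁻¹ j < v⁻¹ (j + 1)) :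
    ell (swap j (j + 1) * v) = ell v + 1 := by
  have := ell_swap_mul_add_one ((finSupp_swap j).mul hv) (j := j) (by simpa using ha)
  rw [swap_mul_self_mul] at this
  exact this.symm

end Length

section Chain

variable {w w' : ℕ → Perm ℕ} {e : ℕ → ℕ} {a c k m p q : ℕ}

lemma chain_of_le (h : k ≤ a) : chain w a k p = p := by
  induction k with
  | zero => rfl
  | succ k ih => simp [chain, h]

lemma chain_succ (h : a ≤ k) : chain w a (k + 1) p = (w (k + 1))⁻¹ (chain w a k p) := by
  simp [chain, show ¬(k + 1 ≤ a) by omega]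

lemma apply_chain_succ (h : a ≤ k) : w (k + 1) (chain w a (k + 1) p) = chain w a k p := by
  simp [chain_succ h]

lemma chain_trans (hak : a ≤ k) (hkm : k ≤ m) :
    chain w a m p = chain w k m (chain w a k p) := by
  induction m, hkm using Nat.le_induction with
  | base => rw [chain_of_le le_rfl]
  | succ m hm ih => rw [chain_succ (by omega), chain_succ hm, ih]

lemma chain_congr (h : ∀ t, a < t → t ≤ m → w t = w' t) : chain w a m p = chain w' a m p := by
  induction m with
  | zero => rfl
  | succ m ih =>
    by_cases hm : m + 1 ≤ a
    · rw [chain_of_le hm, chain_of_le hm]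
    · rw [chain_succ (by omega), chain_succ (by omega), h (m + 1) (by omega) le_rfl,
        ih fun t ht htm => h t ht (by omega)]

lemma chain_eq_of_agree (hac : a ≤ c) (hcm : c ≤ m) (h : ∀ t, c < t → t ≤ m → w t = w' t) :
    chain w a m p = chain w' c m (chain w a c p) := by
  rw [chain_trans hac hcm, chain_congr h]

/-- The strand through dot `q` of column `c` continues (at least) up to column `m`. -/
def Reaches (e : ℕ → ℕ) (w : ℕ → Perm ℕ) (c q m : ℕ) : Prop :=
  ∀ k, c < k → k ≤ m → chain w c k q < e k

lemma rank_eq_ncard (e : ℕ → ℕ) (w : ℕ → Perm ℕ) (a b : ℕ) :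
    rank e w a b = {p | p < e a ∧ Reaches e w a p b}.ncard := rfl

lemma reaches_of_le (h : m ≤ c) : Reaches e w c q m := fun _ hk hkm => absurd hk (by omega)

lemma Reaches.mono (h : Reaches e w c q m) (hk : k ≤ m) : Reaches e w c q k :=
  fun t ht htk => h t ht (htk.trans hk)

lemma reaches_succ_iff (h : c ≤ m) :
    Reaches e w c q (m + 1) ↔ Reaches e w c q m ∧ chain w c (m + 1) q < e (m + 1) := by
  refine ⟨fun hr => ⟨hr.mono m.le_succ, hr _ (by omega) le_rfl⟩, fun ⟨hr, hlt⟩ k hk hkm => ?_⟩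
  rcases Nat.lt_or_eq_of_le hkm with hkm | rfl
  · exact hr k hk (by omega)
  · exact hlt

lemma Reaches.chain_lt (h : Reaches e w c q m) (hq : q < e c) (hck : c ≤ k) (hkm : k ≤ m) :
    chain w c k q < e k := by
  rcases Nat.lt_or_eq_of_le hck with hck | rfl
  · exact h k hck hkm
  · rwa [chain_of_le le_rfl]

lemma Reaches.trans (h : Reaches e w c q k) (h' : Reaches e w k (chain w c k q) m)
    (hck : c ≤ k) : Reaches e w c q m := fun t ht htm => by
  rcases le_or_gt t k with htk | htk
  · exact h t ht htk
  · rw [chain_trans hck htk.le]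
    exact h' t htk htm

lemma Reaches.tail (h : Reaches e w c q m) (hck : c ≤ k) :
    Reaches e w k (chain w c k q) m := fun t ht htm => by
  rw [← chain_trans hck ht.le]
  exact h t (by omega) htm

end Chain

section RankInvariance

variable {w w' : ℕ → Perm ℕ} {e : ℕ → ℕ}

/-- Ranks only see where a strand goes while it stays inside the diagram. -/
theorem rank_congr_of_links
    (h : ∀ k p, p < e k → (w (k + 1))⁻¹ p = (w' (k + 1))⁻¹ p ∨
      e (k + 1) ≤ (w (k + 1))⁻¹ p ∧ e (k + 1) ≤ (w' (k + 1))⁻¹ p) :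
    rank e w = rank e w' := by
  funext a b
  have key : ∀ p, p < e a → ∀ m, (Reaches e w a p m ↔ Reaches e w' a p m) ∧
      (Reaches e w a p m → chain w a m p = chain w' a m p) := by
    intro p hp m
    induction m with
    | zero => exact ⟨iff_of_true (reaches_of_le (Nat.zero_le a)) (reaches_of_le (Nat.zero_le a)),
        fun _ => rfl⟩
    | succ m ih =>
      rcases lt_or_ge m a with hma | ham
      · exact ⟨iff_of_true (reaches_of_le hma) (reaches_of_le hma),
          fun _ => by rw [chain_of_le hma, chain_of_le hma]⟩
      rw [reaches_succ_iff ham, reaches_succ_iff ham, chain_succ ham, chain_succ ham]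
      by_cases hr : Reaches e w a p m
      · rw [← ih.2 hr]
        rcases h m _ (hr.chain_lt hp ham le_rfl) with heq | ⟨hge, hge'⟩
        · rw [heq]
          exact ⟨and_congr ih.1 Iff.rfl, fun _ => rfl⟩
        · exact ⟨iff_of_false (fun h' => absurd h'.2 (by omega))
            (fun h' => absurd h'.2 (by omega)), fun h' => absurd h'.2 (by omega)⟩
      · exact ⟨iff_of_false (fun h' => hr h'.1) (fun h' => hr (ih.1.2 h'.1)),
          fun h' => absurd h'.1 hr⟩
  rw [rank_eq_ncard, rank_eq_ncard]
  congr 1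
  ext p
  exact and_congr_right fun hp => (key p hp b).1

def relabel (w : ℕ → Perm ℕ) (c : ℕ) (σ : Perm ℕ) : ℕ → Perm ℕ :=
  Function.update (Function.update w c (w c * σ)) (c + 1) (σ⁻¹ * w (c + 1))

section Relabel

variable {c a k p : ℕ} {σ : Perm ℕ}

lemma relabel_of_ne {t : ℕ} (ht : t ≠ c) (ht1 : t ≠ c + 1) : relabel w c σ t = w t := by
  rw [relabel, Function.update_of_ne ht1, Function.update_of_ne ht]

lemma chain_relabel_of_lt (hkc : k < c) : chain (relabel w c σ) a k p = chain w a k p :=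
  chain_congr fun t _ htk => relabel_of_ne (by omega) (by omega)

lemma apply_chain_relabel (hac : a < c) : σ (chain (relabel w c σ) a c p) = chain w a c p := by
  obtain ⟨c, rfl⟩ : ∃ c', c = c' + 1 := ⟨c - 1, by omega⟩
  have hinv : (relabel w (c + 1) σ (c + 1))⁻¹ = σ⁻¹ * (w (c + 1))⁻¹ := by simp [relabel]
  rw [chain_succ (by omega), chain_succ (by omega), hinv, Perm.mul_apply,
    chain_relabel_of_lt (by omega)]
  exact σ.apply_symm_apply _

lemma chain_relabel_of_gt (hac : a ≤ c) (hck : c < k) :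
    chain (relabel w c σ) a k p =
      chain w (c + 1) k ((w (c + 1))⁻¹ (σ (chain (relabel w c σ) a c p))) := by
  have hinv : (relabel w c σ (c + 1))⁻¹ = (w (c + 1))⁻¹ * σ := by simp [relabel]
  rw [chain_eq_of_agree (by omega) hck fun t ht _ => relabel_of_ne (by omega) (by omega),
    chain_succ hac, hinv, Perm.mul_apply]

theorem rank_relabel (hσ : ∀ p, σ p < e c ↔ p < e c) : rank e (relabel w c σ) = rank e w := by
  have hw : ∀ a k p, a ≤ c → c < k →
      chain w a k p = chain w (c + 1) k ((w (c + 1))⁻¹ (chain w a c p)) := fun a k p hac hck => by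
    rw [chain_trans (by omega) hck, chain_succ hac]
  funext a b
  rcases lt_trichotomy a c with hac | rfl | hca
  · have hlt : ∀ k p, chain (relabel w c σ) a k p < e k ↔ chain w a k p < e k := fun k p => by
      rcases lt_trichotomy k c with hkc | rfl | hck
      · rw [chain_relabel_of_lt hkc]
      · rw [← apply_chain_relabel (w := w) (σ := σ) hac]
        exact (hσ _).symm
      · rw [chain_relabel_of_gt hac.le hck, apply_chain_relabel hac, hw a k p hac.le hck]
    simp only [rank_eq_ncard, Reaches, hlt]
  · have hset : {p | p < e a ∧ Reaches e (relabel w a σ) a p b} =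
        σ ⁻¹' {q | q < e a ∧ Reaches e w a q b} := by
      ext p
      refine and_congr (hσ p).symm (forall₂_congr fun k hk => ?_)
      rw [chain_relabel_of_gt le_rfl hk, hw a k (σ p) le_rfl hk, chain_of_le le_rfl,
        chain_of_le le_rfl]
    rw [rank_eq_ncard, rank_eq_ncard, hset,
      Set.ncard_preimage_of_injective_subset_range σ.injective fun q _ => σ.surjective q]
  · simp only [rank_eq_ncard, Reaches]
    congr 1
    ext p
    refine and_congr_right fun _ => forall₂_congr fun k hk => ?_
    rw [chain_congr fun t ht _ => relabel_of_ne (σ := σ) (by omega) (by omega)]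

end Relabel

/-- Dots `j, j + 1` of column `k - 1` that both end there can be swapped. -/
lemma rank_update_swap_mul {k j : ℕ} (hj : e k ≤ (w k)⁻¹ j) (hj1 : e k ≤ (w k)⁻¹ (j + 1)) :
    rank e (Function.update w k (swap j (j + 1) * w k)) = rank e w := by
  refine rank_congr_of_links fun t p _ => ?_
  rcases eq_or_ne (t + 1) k with rfl | htk
  · simp only [Function.update_self, mul_inv_rev, swap_inv, Perm.mul_apply]
    by_cases hp : p = j ∨ p = j + 1
    · right
      rcases hp with rfl | rfl
      · rw [swap_apply_left]; exact ⟨hj1, hj⟩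
      · rw [swap_apply_right]; exact ⟨hj, hj1⟩
    · push Not at hp
      left
      rw [swap_apply_of_ne_of_ne hp.1 hp.2]
  · exact Or.inl (by rw [Function.update_of_ne htk])

/-- Dots `j, j + 1` of column `k` that both start there can be swapped. -/
lemma rank_update_mul_swap {k j : ℕ} (hj : e (k - 1) ≤ w k j) (hj1 : e (k - 1) ≤ w k (j + 1)) :
    rank e (Function.update w k (w k * swap j (j + 1))) = rank e w := by
  refine rank_congr_of_links fun t p hp => Or.inl ?_
  rcases eq_or_ne (t + 1) k with rfl | htk
  · have hj' : (w (t + 1))⁻¹ p ≠ j := fun h => by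
      rw [Perm.inv_eq_iff_eq] at h; simp only [Nat.add_sub_cancel] at hj; omega
    have hj1' : (w (t + 1))⁻¹ p ≠ j + 1 := fun h => by
      rw [Perm.inv_eq_iff_eq] at h; simp only [Nat.add_sub_cancel] at hj1; omega
    simp only [Function.update_self, mul_inv_rev, swap_inv, Perm.mul_apply]
    rw [swap_apply_of_ne_of_ne hj' hj1']
  · rw [Function.update_of_ne htk]

end RankInvariance

section Strands

open Classical

variable {n : ℕ} {e : ℕ → ℕ} {w : ℕ → Perm ℕ} {a b c m q : ℕ} {σ τ : ℕ × ℕ}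

/-- The dot `σ = (column, position)` is the first dot of its strand. -/
def IsStrandStart (e : ℕ → ℕ) (w : ℕ → Perm ℕ) (σ : ℕ × ℕ) : Prop :=
  σ.2 < e σ.1 ∧ (σ.1 = 0 ∨ e (σ.1 - 1) ≤ w σ.1 σ.2)

lemma startDot_fst_le : (startDot e w c q).1 ≤ c := by
  induction c generalizing q with
  | zero => simp [startDot]
  | succ c ih =>
    rw [startDot]
    split
    · exact ih.trans c.le_succ
    · exact le_rfl

lemma isStrandStart_startDot (hq : q < e c) : IsStrandStart e w (startDot e w c q) := by
  induction c generalizing q with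
  | zero => exact ⟨hq, Or.inl rfl⟩
  | succ c ih =>
    rw [startDot]
    split
    · next h => exact ih h
    · next h => exact ⟨hq, Or.inr (not_lt.1 h)⟩

lemma startDot_spec (hq : q < e c) :
    chain w (startDot e w c q).1 c (startDot e w c q).2 = q ∧
      Reaches e w (startDot e w c q).1 (startDot e w c q).2 c := by
  induction c generalizing q with
  | zero => exact ⟨rfl, reaches_of_le le_rfl⟩
  | succ c ih =>
    rw [startDot]
    split
    · next h =>
      obtain ⟨hchain, hreach⟩ := ih h
      have hle : (startDot e w c (w (c + 1) q)).1 ≤ c := startDot_fst_le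
      have hsucc : chain w (startDot e w c (w (c + 1) q)).1 (c + 1)
          (startDot e w c (w (c + 1) q)).2 = q := by
        rw [chain_succ hle, hchain, Perm.inv_def, symm_apply_apply]
      exact ⟨hsucc, (reaches_succ_iff hle).2 ⟨hreach, by rw [hsucc]; exact hq⟩⟩
    · exact ⟨chain_of_le le_rfl, reaches_of_le le_rfl⟩

lemma startDot_chain (hσ : IsStrandStart e w σ) (hm : σ.1 ≤ m) (h : Reaches e w σ.1 σ.2 m) :
    startDot e w m (chain w σ.1 m σ.2) = σ := by
  induction m, hm using Nat.le_induction with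
  | base =>
    rw [chain_of_le le_rfl]
    rcases σ with ⟨_ | c, q⟩
    · rfl
    · rw [startDot, if_neg (not_lt.2 (by simpa using hσ.2))]
  | succ m hm ih =>
    rw [startDot, apply_chain_succ hm, if_pos (h.chain_lt hσ.1 hm (by omega))]
    exact ih (h.mono m.le_succ)

/-- The last column reached by the strand through `σ` (the diagram ends at column `n`). -/
noncomputable def strandEnd (n : ℕ) (e : ℕ → ℕ) (w : ℕ → Perm ℕ) (σ : ℕ × ℕ) : ℕ :=
  Nat.findGreatest (Reaches e w σ.1 σ.2) n

lemma strandEnd_le : strandEnd n e w σ ≤ n := Nat.findGreatest_le n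

lemma reaches_strandEnd : Reaches e w σ.1 σ.2 (strandEnd n e w σ) :=
  Nat.findGreatest_spec (Nat.zero_le n) (reaches_of_le (Nat.zero_le _))

lemma reaches_iff_le_strandEnd (hb : b ≤ n) : Reaches e w σ.1 σ.2 b ↔ b ≤ strandEnd n e w σ :=
  ⟨Nat.le_findGreatest hb, reaches_strandEnd.mono⟩

lemma le_chain_strandEnd_succ (h : strandEnd n e w σ < n) :
    e (strandEnd n e w σ + 1) ≤ chain w σ.1 (strandEnd n e w σ + 1) σ.2 := by
  by_contra hlt
  have hreach : Reaches e w σ.1 σ.2 (strandEnd n e w σ + 1) := by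
    rcases le_or_gt σ.1 (strandEnd n e w σ) with hle | hlt'
    · exact (reaches_succ_iff hle).2 ⟨reaches_strandEnd, not_le.1 hlt⟩
    · exact reaches_of_le hlt'
  have := (reaches_iff_le_strandEnd h).1 hreach
  omega

/-- The strands of the diagram, represented by their starting dots. -/
noncomputable def strands (n : ℕ) (e : ℕ → ℕ) (w : ℕ → Perm ℕ) : Finset (ℕ × ℕ) :=
  (Finset.range (n + 1) ×ˢ Finset.range ((Finset.range (n + 1)).sup e)).filter
    (IsStrandStart e w)

lemma mem_strands : σ ∈ strands n e w ↔ σ.1 ≤ n ∧ IsStrandStart e w σ := by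
  simp only [strands, Finset.mem_filter, Finset.mem_product, Finset.mem_range]
  refine ⟨fun ⟨⟨h1, _⟩, h⟩ => ⟨by omega, h⟩, fun ⟨h1, h⟩ => ⟨⟨by omega, ?_⟩, h⟩⟩
  exact h.1.trans_le (Finset.le_sup (f := e) (Finset.mem_range.2 (by omega)))

lemma rank_eq_card_strands (hab : a ≤ b) (hb : b ≤ n) :
    rank e w a b =
      ((strands n e w).filter fun σ => σ.1 ≤ a ∧ b ≤ strandEnd n e w σ).card := by
  rw [rank_eq_ncard, ← Set.ncard_coe_finset]
  refine Set.ncard_congr (fun p _ => startDot e w a p) ?_ ?_ ?_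
  · rintro p ⟨hp, hreach⟩
    obtain ⟨hchain, hreach'⟩ := startDot_spec (w := w) hp
    rw [← hchain] at hreach
    simp only [Finset.coe_filter, Set.mem_ofPred_eq, mem_strands]
    refine ⟨⟨startDot_fst_le.trans (hab.trans hb), isStrandStart_startDot hp⟩, startDot_fst_le,
      (reaches_iff_le_strandEnd hb).1 (hreach'.trans hreach startDot_fst_le)⟩
  · rintro p p' ⟨hp, -⟩ ⟨hp', -⟩ h
    rw [← (startDot_spec (w := w) hp).1, ← (startDot_spec (w := w) hp').1, h]
  · intro σ hσ
    simp only [Finset.coe_filter, Set.mem_ofPred_eq, mem_strands] at hσ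
    obtain ⟨⟨-, hstart⟩, hσa, hend⟩ := hσ
    have hreach := (reaches_iff_le_strandEnd hb).2 hend
    exact ⟨chain w σ.1 a σ.2, ⟨hreach.chain_lt hstart.1 hσa hab, hreach.tail hσa⟩,
      startDot_chain hstart hσa (hreach.mono hab)⟩

lemma rank_pred_eq (hab : a < b) (hb : b ≤ n) :
    rank e w a (b - 1) = rank e w a b +
      ((strands n e w).filter fun σ => σ.1 ≤ a ∧ strandEnd n e w σ + 1 = b).card := by
  rw [rank_eq_card_strands (n := n) (by omega) (by omega), rank_eq_card_strands hab.le hb]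
  exact Finset.card_filter_eq_add (fun _ _ => by omega) fun _ _ _ => by omega

lemma rank_succ_eq (hab : a < b) (hb : b ≤ n) :
    rank e w (a + 1) b = rank e w a b +
      ((strands n e w).filter fun σ => σ.1 = a + 1 ∧ b ≤ strandEnd n e w σ).card := by
  rw [rank_eq_card_strands hab hb, rank_eq_card_strands hab.le hb]
  exact Finset.card_filter_eq_add (fun _ _ => by omega) fun _ _ _ => by omega

/-- Pairs of strands `(σ, τ)` where `τ` starts after `σ`, at the latest right after `σ` ends,
and outlives it; each such pair forces a crossing. -/
noncomputable def forcedPairs (n : ℕ) (e : ℕ → ℕ) (w : ℕ → Perm ℕ) :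
    Finset ((ℕ × ℕ) × (ℕ × ℕ)) :=
  (strands n e w ×ˢ strands n e w).filter fun στ =>
    στ.1.1 < στ.2.1 ∧ στ.2.1 ≤ strandEnd n e w στ.1 + 1 ∧
      strandEnd n e w στ.1 < strandEnd n e w στ.2

lemma mem_forcedPairs :
    (σ, τ) ∈ forcedPairs n e w ↔ σ.1 ≤ n ∧ IsStrandStart e w σ ∧ τ.1 ≤ n ∧
      IsStrandStart e w τ ∧ σ.1 < τ.1 ∧ τ.1 ≤ strandEnd n e w σ + 1 ∧
        strandEnd n e w σ < strandEnd n e w τ := by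
  simp only [forcedPairs, Finset.mem_filter, Finset.mem_product, mem_strands, and_assoc]

lemma forcedPairs_fiber {i j : ℕ} (hij : i < j) :
    (forcedPairs n e w).filter (fun στ => (στ.2.1 - 1, strandEnd n e w στ.1 + 1) = (i, j)) =
      ((strands n e w).filter fun σ => σ.1 ≤ i ∧ strandEnd n e w σ + 1 = j) ×ˢ
        ((strands n e w).filter fun τ => τ.1 = i + 1 ∧ j ≤ strandEnd n e w τ) := by
  ext ⟨σ, τ⟩
  simp only [forcedPairs, Finset.mem_filter, Finset.mem_product, Prod.mk.injEq]
  constructor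
  · rintro ⟨⟨⟨hσ, hτ⟩, h⟩, h'⟩
    exact ⟨⟨hσ, by omega⟩, hτ, by omega⟩
  · rintro ⟨⟨hσ, h⟩, hτ, h'⟩
    exact ⟨⟨⟨hσ, hτ⟩, by omega⟩, by omega⟩

/-- The expected codimension counts forced pairs: `r_{i,j-1} - r_{ij}` strands end at `j - 1`
having started by `i`, and `r_{i+1,j} - r_{ij}` strands start at `i + 1` and reach `j`. -/
theorem codim_eq_card_forcedPairs : codim n (rank e w) = (forcedPairs n e w).card := by
  set T := (Finset.range (n + 1) ×ˢ Finset.range (n + 1)).filter fun ij => ij.1 < ij.2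
  have hcodim : codim n (rank e w) = ∑ ij ∈ T,
      (rank e w ij.1 (ij.2 - 1) - rank e w ij.1 ij.2) *
        (rank e w (ij.1 + 1) ij.2 - rank e w ij.1 ij.2) := by
    rw [codim, ← Finset.sum_product', Finset.sum_filter]
  have hmaps : Set.MapsTo (fun στ => (στ.2.1 - 1, strandEnd n e w στ.1 + 1))
      (forcedPairs n e w : Set ((ℕ × ℕ) × (ℕ × ℕ))) T := by
    rintro ⟨σ, τ⟩ hp
    obtain ⟨-, -, -, -, hστ, hτσ, hend⟩ := mem_forcedPairs.1 (Finset.mem_coe.1 hp)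
    have := strandEnd_le (n := n) (e := e) (w := w) (σ := τ)
    simp only [T, Finset.coe_filter, Finset.mem_product, Finset.mem_range, Set.mem_ofPred_eq]
    omega
  rw [hcodim, Finset.card_eq_sum_card_fiberwise hmaps]
  refine Finset.sum_congr rfl fun ⟨i, j⟩ hij => ?_
  simp only [T, Finset.mem_filter, Finset.mem_product, Finset.mem_range] at hij
  rw [forcedPairs_fiber hij.2, Finset.card_product, rank_pred_eq (n := n) hij.2 (by omega),
    rank_succ_eq (n := n) hij.2 (by omega), Nat.add_sub_cancel_left, Nat.add_sub_cancel_left]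

/-- The first column, from the start of `τ` on, where `τ` runs above `σ`. -/
noncomputable def crossCol (w : ℕ → Perm ℕ) (σ τ : ℕ × ℕ) : ℕ :=
  sInf {k | τ.1 ≤ k ∧ chain w τ.1 k τ.2 < chain w σ.1 k σ.2}

lemma crossCol_spec (hp : (σ, τ) ∈ forcedPairs n e w) :
    τ.1 ≤ crossCol w σ τ ∧
      chain w τ.1 (crossCol w σ τ) τ.2 < chain w σ.1 (crossCol w σ τ) σ.2 ∧
      crossCol w σ τ ≤ strandEnd n e w σ + 1 ∧
      ∀ k, τ.1 ≤ k → k < crossCol w σ τ → chain w σ.1 k σ.2 ≤ chain w τ.1 k τ.2 := by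
  obtain ⟨-, -, -, hτ, hστ, hτσ, hend⟩ := mem_forcedPairs.1 hp
  have hlt : strandEnd n e w σ < n := hend.trans_le strandEnd_le
  -- at the column after `σ` ends, `τ` is still inside the diagram and `σ` is not
  have hmem : strandEnd n e w σ + 1 ∈
      {k | τ.1 ≤ k ∧ chain w τ.1 k τ.2 < chain w σ.1 k σ.2} :=
    ⟨hτσ, (reaches_strandEnd.chain_lt hτ.1 hτσ hend).trans_le (le_chain_strandEnd_succ hlt)⟩
  refine ⟨(Nat.sInf_mem ⟨_, hmem⟩).1, (Nat.sInf_mem ⟨_, hmem⟩).2, Nat.sInf_le hmem,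
    fun k hk hlt' => not_lt.1 fun h => Nat.notMem_of_lt_sInf hlt' ⟨hk, h⟩⟩

lemma crossCol_mem_inversions (hp : (σ, τ) ∈ forcedPairs n e w) :
    1 ≤ crossCol w σ τ ∧ crossCol w σ τ ≤ n ∧
      (chain w τ.1 (crossCol w σ τ) τ.2, chain w σ.1 (crossCol w σ τ) σ.2) ∈
        inversions (w (crossCol w σ τ)) := by
  obtain ⟨hτk, hbelow, hkσ, hmin⟩ := crossCol_spec hp
  obtain ⟨-, hσ, -, hτ, hστ, -, hend⟩ := mem_forcedPairs.1 hp
  obtain ⟨k, hk⟩ : ∃ k, crossCol w σ τ = k + 1 := ⟨crossCol w σ τ - 1, by omega⟩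
  rw [hk] at hτk hbelow hkσ hmin ⊢
  have hn : strandEnd n e w σ < n := hend.trans_le strandEnd_le
  refine ⟨by omega, by omega, hbelow, ?_⟩
  have hσk : chain w σ.1 k σ.2 < e k :=
    (reaches_strandEnd (n := n)).chain_lt hσ.1 (by omega) (by omega)
  dsimp only
  rw [apply_chain_succ (by omega)]
  rcases Nat.lt_or_eq_of_le hτk with hτk | hτk
  · rw [apply_chain_succ (by omega)]
    refine lt_of_le_of_ne (hmin k (by omega) (by omega)) fun heq => hbelow.ne ?_
    rw [chain_succ (by omega), chain_succ (by omega), heq]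
  · -- `τ` starts in column `k + 1`, so it enters from outside column `k`
    have hstart := hτ.2.resolve_left (by omega)
    rw [hτk, Nat.add_sub_cancel] at hstart
    have hτpos : chain w τ.1 (k + 1) τ.2 = τ.2 := by rw [← hτk]; exact chain_of_le le_rfl
    rw [hτpos]
    omega

lemma startDot_crossCol (hp : (σ, τ) ∈ forcedPairs n e w) :
    startDot e w (crossCol w σ τ - 1) (w (crossCol w σ τ) (chain w σ.1 (crossCol w σ τ) σ.2)) = σ ∧
      startDot e w (crossCol w σ τ) (chain w τ.1 (crossCol w σ τ) τ.2) = τ := by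
  obtain ⟨hτk, -, hkσ, -⟩ := crossCol_spec hp
  obtain ⟨-, hσ, -, hτ, hστ, -, hend⟩ := mem_forcedPairs.1 hp
  obtain ⟨k, hk⟩ : ∃ k, crossCol w σ τ = k + 1 := ⟨crossCol w σ τ - 1, by omega⟩
  rw [hk, Nat.add_sub_cancel, apply_chain_succ (by omega)]
  rw [hk] at hτk hkσ
  exact ⟨startDot_chain hσ (by omega) ((reaches_strandEnd (n := n)).mono (by omega)),
    startDot_chain hτ hτk ((reaches_strandEnd (n := n)).mono (by omega))⟩

noncomputable def inversionFinset (v : Perm ℕ) : Finset (ℕ × ℕ) :=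
  if h : (inversions v).Finite then h.toFinset else ∅

lemma mem_inversionFinset {v : Perm ℕ} (hv : FinSupp v) {x : ℕ × ℕ} :
    x ∈ inversionFinset v ↔ x ∈ inversions v := by
  rw [inversionFinset, dif_pos (finite_inversions hv), Set.Finite.mem_toFinset]

lemma card_inversionFinset {v : Perm ℕ} (hv : FinSupp v) : (inversionFinset v).card = ell v := by
  rw [inversionFinset, dif_pos (finite_inversions hv),
    ← Set.ncard_eq_toFinset_card _ (finite_inversions hv)]
  rfl

/-- Each forced pair is sent injectively to the crossing at its `crossCol`. -/
theorem codim_le_diagLength (hfin : ∀ k, 1 ≤ k → k ≤ n → FinSupp (w k)) :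
    codim n (rank e w) ≤ diagLength n w := by
  have hlen : diagLength n w = ((Finset.Icc 1 n).sigma fun k => inversionFinset (w k)).card := by
    rw [Finset.card_sigma, diagLength]
    refine Finset.sum_congr rfl fun k hk => ?_
    rw [Finset.mem_Icc] at hk
    rw [card_inversionFinset (hfin k hk.1 hk.2)]
  rw [codim_eq_card_forcedPairs, hlen]
  refine Finset.card_le_card_of_injOn (fun στ => ⟨crossCol w στ.1 στ.2,
    (chain w στ.2.1 (crossCol w στ.1 στ.2) στ.2.2, chain w στ.1.1 (crossCol w στ.1 στ.2) στ.1.2)⟩)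
    (fun στ hp => ?_) fun στ hp στ' hp' h => ?_
  · obtain ⟨h1, hn, hinv⟩ := crossCol_mem_inversions (Finset.mem_coe.1 hp)
    simp only [Finset.coe_sigma, Set.mem_sigma_iff, Finset.mem_coe, Finset.mem_Icc]
    exact ⟨⟨h1, hn⟩, (mem_inversionFinset (hfin _ h1 hn)).2 hinv⟩
  · obtain ⟨hσ, hτ⟩ := startDot_crossCol (Finset.mem_coe.1 hp)
    obtain ⟨hσ', hτ'⟩ := startDot_crossCol (Finset.mem_coe.1 hp')
    have hcol := congrArg Sigma.fst h
    have hdots := congrArg Sigma.snd h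
    simp only [Prod.mk.injEq] at hcol hdots
    exact Prod.ext (by rw [← hσ, ← hσ', hdots.2, hcol]) (by rw [← hτ, ← hτ', hdots.1, hcol])

end Strands

section Transformation

variable {n : ℕ} {e : ℕ → ℕ} {w : ℕ → Perm ℕ} {v : Perm ℕ} {i j k m : ℕ}

def DescentsBelow (v : Perm ℕ) (m : ℕ) : Prop := ∀ k, v (k + 1) < v k → k < m

lemma DescentsBelow.mul_swap (h : DescentsBelow v m) (hj : j + 1 < m) :
    DescentsBelow (v * swap j (j + 1)) m := fun t ht => by
  by_contra htm
  rw [Perm.mul_apply, Perm.mul_apply, swap_apply_of_ne_of_ne (by omega) (by omega),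
    swap_apply_of_ne_of_ne (by omega) (by omega)] at ht
  exact htm (h t ht)

/-- `s_j v` has a new descent only where `v` maps `t, t + 1` to `j, j + 1`. -/
lemma DescentsBelow.swap_mul (h : DescentsBelow v m)
    (hj : v⁻¹ (j + 1) = v⁻¹ j + 1 → v⁻¹ j < m) : DescentsBelow (swap j (j + 1) * v) m :=
  fun t ht => by
    by_cases hx : v t = j ∧ v (t + 1) = j + 1
    · have ht' : v⁻¹ j = t := by rw [Perm.inv_eq_iff_eq, hx.1]
      have ht1 : v⁻¹ (j + 1) = t + 1 := by rw [Perm.inv_eq_iff_eq, hx.2]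
      rw [← ht']
      exact hj (by rw [ht', ht1])
    · refine h t (not_le.1 fun hle => ?_)
      have := swap_lt_swap (lt_of_not_descent (v := v) (not_lt.2 hle)) hx
      rw [Perm.mul_apply, Perm.mul_apply] at ht
      omega

lemma isLace_update (hw : IsLace n e w) (hk : 1 ≤ k) (hkn : k ≤ n) {u : Perm ℕ}
    (hu : FinSupp u) (hd : DescentsBelow u (e k)) (hdi : DescentsBelow u⁻¹ (e (k - 1))) :
    IsLace n e (Function.update w k u) := by
  refine ⟨fun t ht => ?_, fun t ht htn => ?_⟩
  · rw [Function.update_of_ne (by omega)]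
    exact hw.1 t ht
  · rcases eq_or_ne t k with rfl | htk
    · rw [Function.update_self]
      exact ⟨hu, hd, hdi⟩
    · rw [Function.update_of_ne htk]
      exact hw.2 t ht htn

lemma isLace_update_mul_swap (hw : IsLace n e w) (hk : 1 ≤ k) (hkn : k ≤ n) (hj : j + 1 < e k)
    (h : w k (j + 1) = w k j + 1 → w k j < e (k - 1)) :
    IsLace n e (Function.update w k (w k * swap j (j + 1))) := by
  obtain ⟨hfin, hd, hdi⟩ := hw.2 k hk hkn
  refine isLace_update hw hk hkn (hfin.mul (finSupp_swap j)) (DescentsBelow.mul_swap hd hj) ?_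
  rw [mul_inv_rev, swap_inv]
  exact DescentsBelow.swap_mul hdi (by simpa only [inv_inv] using h)

lemma isLace_update_swap_mul (hw : IsLace n e w) (hk : 1 ≤ k) (hkn : k ≤ n)
    (hj : j + 1 < e (k - 1)) (h : (w k)⁻¹ (j + 1) = (w k)⁻¹ j + 1 → (w k)⁻¹ j < e k) :
    IsLace n e (Function.update w k (swap j (j + 1) * w k)) := by
  obtain ⟨hfin, hd, hdi⟩ := hw.2 k hk hkn
  refine isLace_update hw hk hkn ((finSupp_swap j).mul hfin) (DescentsBelow.swap_mul hd h) ?_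
  rw [mul_inv_rev, swap_inv]
  exact DescentsBelow.mul_swap hdi hj

lemma diagLength_update (hk : 1 ≤ k) (hkn : k ≤ n) (u : Perm ℕ) :
    diagLength n (Function.update w k u) + ell (w k) = diagLength n w + ell u := by
  have hmem : k ∈ Finset.Icc 1 n := Finset.mem_Icc.2 ⟨hk, hkn⟩
  have hrest : ∑ t ∈ (Finset.Icc 1 n).erase k, ell (Function.update w k u t) =
      ∑ t ∈ (Finset.Icc 1 n).erase k, ell (w t) :=
    Finset.sum_congr rfl fun t ht => by rw [Function.update_of_ne (Finset.ne_of_mem_erase ht)]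
  rw [diagLength, diagLength, ← Finset.add_sum_erase _ _ hmem, ← Finset.add_sum_erase _ _ hmem,
    Function.update_self, hrest]
  omega

lemma diagLength_le_of_isMinimal {w' : ℕ → Perm ℕ} (hw : IsMinimal n e w) (hw' : IsLace n e w')
    (hr : rank e w' = rank e w) : diagLength n w ≤ diagLength n w' := by
  rw [hw.2, ← hr]
  exact codim_le_diagLength fun k hk hkn => (hw'.2 k hk hkn).1

def transform (w : ℕ → Perm ℕ) (i j : ℕ) : ℕ → Perm ℕ :=
  Function.update (Function.update w i (w i * swap j (j + 1))) (i + 1)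
    (swap j (j + 1) * w (i + 1))

lemma rank_transform (hj : j + 1 < e i) : rank e (transform w i j) = rank e w := by
  have := rank_relabel (w := w) (c := i) (σ := swap j (j + 1)) fun _ => swap_lt_iff hj
  rwa [relabel, swap_inv] at this

lemma diagLength_transform (hw : IsLace n e w) (hi : 1 ≤ i) (hin : i + 1 ≤ n)
    (hx : Xor' (w i (j + 1) < w i j) ((w (i + 1))⁻¹ (j + 1) < (w (i + 1))⁻¹ j)) :
    diagLength n (transform w i j) = diagLength n w := by
  have hfin := (hw.2 i hi (by omega)).1
  have hfin' := (hw.2 (i + 1) (by omega) hin).1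
  have h₁ := diagLength_update (n := n) (w := w) hi (by omega) (w i * swap j (j + 1))
  have h₂ := diagLength_update (w := Function.update w i (w i * swap j (j + 1)))
    (by omega : 1 ≤ i + 1) hin (swap j (j + 1) * w (i + 1))
  rw [Function.update_of_ne (by omega)] at h₂
  rw [transform]
  rcases hx with ⟨hA, hB⟩ | ⟨hB, hA⟩
  · have := ell_mul_swap_add_one hfin hA
    have := ell_swap_mul hfin' (lt_of_not_descent hB)
    omega
  · have := ell_mul_swap hfin (lt_of_not_descent hA)
    have := ell_swap_mul_add_one hfin' hB
    omega

/-- If both dots `j, j + 1` of column `i` ended there, undoing their crossing in `w i` alone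
would give a shorter diagram with the same ranks. -/
lemma isLace_transform_of_descent (hw : IsMinimal n e w) (hi : 1 ≤ i) (hin : i + 1 ≤ n)
    (hj : j + 1 < e i) (hA : w i (j + 1) < w i j) : IsLace n e (transform w i j) := by
  set wA := Function.update w i (w i * swap j (j + 1))
  have hwA : wA (i + 1) = w (i + 1) := Function.update_of_ne (by omega) _ _
  have hlaceA : IsLace n e wA := isLace_update_mul_swap hw.1 hi (by omega) hj fun h => by omega
  have htrans : transform w i j = Function.update wA (i + 1) (swap j (j + 1) * wA (i + 1)) := by
    rw [hwA]; rfl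
  by_cases hend : (w (i + 1))⁻¹ (j + 1) = (w (i + 1))⁻¹ j + 1 ∧ e (i + 1) ≤ (w (i + 1))⁻¹ j
  · exfalso
    have hrank : rank e wA = rank e w := by
      rw [← rank_transform (w := w) hj, htrans,
        rank_update_swap_mul (by rw [hwA]; exact hend.2) (by rw [hwA]; omega)]
    have hlen : diagLength n wA + ell (w i) = diagLength n w + ell (w i * swap j (j + 1)) :=
      diagLength_update hi (by omega) _
    have := ell_mul_swap_add_one (hw.1.2 i hi (by omega)).1 hA
    have := diagLength_le_of_isMinimal hw hlaceA hrank
    omega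
  · rw [htrans]
    refine isLace_update_swap_mul hlaceA (by omega) hin (by simpa using hj) ?_
    rw [hwA]
    exact fun h => not_le.1 fun hle => hend ⟨h, hle⟩

/-- Symmetric to `isLace_transform_of_descent`, with the dots `j, j + 1` starting at column `i`. -/
lemma isLace_transform_of_inv_descent (hw : IsMinimal n e w) (hi : 1 ≤ i) (hin : i + 1 ≤ n)
    (hj : j + 1 < e i) (hB : (w (i + 1))⁻¹ (j + 1) < (w (i + 1))⁻¹ j) :
    IsLace n e (transform w i j) := by
  set wB := Function.update w (i + 1) (swap j (j + 1) * w (i + 1))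
  have hwB : wB i = w i := Function.update_of_ne (by omega) _ _
  have hlaceB : IsLace n e wB :=
    isLace_update_swap_mul hw.1 (by omega) hin (by simpa using hj) fun h => by omega
  have htrans : transform w i j = Function.update wB i (wB i * swap j (j + 1)) := by
    rw [hwB, transform, Function.update_comm (by omega)]
  by_cases hstart : w i (j + 1) = w i j + 1 ∧ e (i - 1) ≤ w i j
  · exfalso
    have hrank : rank e wB = rank e w := by
      rw [← rank_transform (w := w) hj, htrans,
        rank_update_mul_swap (by rw [hwB]; exact hstart.2) (by rw [hwB]; omega)]
    have hlen : diagLength n wB + ell (w (i + 1)) =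
        diagLength n w + ell (swap j (j + 1) * w (i + 1)) := diagLength_update (by omega) hin _
    have := ell_swap_mul_add_one (hw.1.2 (i + 1) (by omega) hin).1 hB
    have := diagLength_le_of_isMinimal hw hlaceB hrank
    omega
  · rw [htrans]
    refine isLace_update_mul_swap hlaceB hi (by omega) hj ?_
    rw [hwB]
    exact fun h => not_le.1 fun hle => hstart ⟨h, hle⟩

end Transformation

end LaceDiagram

theorem transStep_preserves_minimal_general (n : ℕ) (e : ℕ → ℕ)
    (w : ℕ → Equiv.Perm ℕ) (hw : IsMinimal n e w) (i j : ℕ)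
    (hi1 : 1 ≤ i) (hi2 : i + 1 ≤ n) (hj : j + 1 < e i)
    (hx : Xor' (w i (j + 1) < w i j) ((w (i + 1))⁻¹ (j + 1) < (w (i + 1))⁻¹ j))
    (w' : ℕ → Equiv.Perm ℕ)
    (hw' : w' = Function.update
      (Function.update w i (w i * Equiv.swap j (j + 1))) (i + 1)
      (Equiv.swap j (j + 1) * w (i + 1))) :
    IsMinimal n e w' ∧ ∀ a b, a ≤ b → b ≤ n → rank e w' a b = rank e w a b := by
  obtain rfl : w' = LaceDiagram.transform w i j := hw'
  have hlace : IsLace n e (LaceDiagram.transform w i j) := hx.elim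
    (fun ⟨hA, _⟩ => LaceDiagram.isLace_transform_of_descent hw hi1 hi2 hj hA)
    (fun ⟨hB, _⟩ => LaceDiagram.isLace_transform_of_inv_descent hw hi1 hi2 hj hB)
  refine ⟨⟨hlace, ?_⟩, fun a b _ _ => by rw [LaceDiagram.rank_transform hj]⟩
  rw [LaceDiagram.rank_transform hj, LaceDiagram.diagLength_transform hw.1 hi1 hi2 hx]
  exact hw.2

/-- applying an allowed transformation to a minimal lace diagram
with rank conditions `r` yields again a minimal lace diagram with rank
conditions `r`. -/
theorem transStep_preserves_minimal (n : ℕ) (hn : 1 ≤ n) (e : ℕ → ℕ)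
    (w : ℕ → Equiv.Perm ℕ) (hw : IsMinimal n e w) (i j : ℕ)
    (hi1 : 1 ≤ i) (hi2 : i + 1 ≤ n) (hj : j + 1 < e i)
    (hx : Xor' (w i (j + 1) < w i j) ((w (i + 1))⁻¹ (j + 1) < (w (i + 1))⁻¹ j))
    (w' : ℕ → Equiv.Perm ℕ)
    (hw' : w' = Function.update
      (Function.update w i (w i * Equiv.swap j (j + 1))) (i + 1)
      (Equiv.swap j (j + 1) * w (i + 1))) :
    IsMinimal n e w' ∧ ∀ a b, a ≤ b → b ≤ n → rank e w' a b = rank e w a b :=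
  transStep_preserves_minimal_general n e w hw i j hi1 hi2 hj hx w' hw'
end

section
/- Let u, w be permutations in S_m and let b_1,...,b_m be independent variables. If w is not less than or equal to u in the Bruhat order on S_m, then the specialization S_w(b_{u(1)},...,b_{u(m)}; b_1,...,b_m) of the double Schubert polynomial is zero. -/
open MvPolynomial

/-! The argument is a descending induction on the length of `w` in `S m`, for the stronger claim
in which the Bruhat order is replaced by the comparison of rank matrices (Ehresmann's criterion),
which behaves well under right multiplication by a simple transposition `s_i`.
For `w = w₀` the specialization of `∏ (x_i - y_j)` contains a factor `b_{u i} - b_{u i}`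
unless `u = w₀`. Otherwise `w` has an ascent `i`, and specializing the divided difference
recursion gives `(b_{u i} - b_{u (i+1)}) S_w(u) = S_{w s_i}(u) - S_{w s_i}(u s_i)`. Since `w s_i`
is neither below `u` nor below `u s_i`, both terms vanish by induction. -/

namespace Schubert

open Equiv Finset

def symGroup (m : ℕ) : Subgroup (Perm ℕ) := fixingSubgroup (Perm ℕ) (Set.Ici m)

section Permutations

variable {m : ℕ} {w : Perm ℕ}

theorem mem_symGroup : w ∈ symGroup m ↔ ∀ t, m ≤ t → w t = t := by
  simp [symGroup, mem_fixingSubgroup_iff, Perm.smul_def]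

theorem apply_lt_of_mem_symGroup (hw : w ∈ symGroup m) {x : ℕ} (hx : x < m) : w x < m := by
  by_contra! hc
  have := w.injective (mem_symGroup.1 hw (w x) hc)
  omega

theorem swap_mem_symGroup {a : ℕ} (ha : a + 1 < m) : swap a (a + 1) ∈ symGroup m :=
  mem_symGroup.2 fun t ht => swap_apply_of_ne_of_ne (by omega) (by omega)

theorem finSupp_of_mem_symGroup (hw : w ∈ symGroup m) : FinSupp w :=
  (Set.finite_Iio m).subset fun x hx => by
    by_contra hc
    exact hx (mem_symGroup.1 hw x (not_lt.1 hc))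

theorem eq_one_of_apply_le (h : ∀ i, w i ≤ i) : w = 1 := by
  ext i
  induction i using Nat.strong_induction_on with
  | _ i ih =>
    rcases (h i).lt_or_eq with hlt | heq
    · exact absurd (w.injective (ih _ hlt)) hlt.ne
    · exact heq

theorem eq_one_of_le_apply (h : ∀ i, i ≤ w i) : w = 1 :=
  inv_eq_one.1 <| eq_one_of_apply_le fun i => by simpa using h (w⁻¹ i)

theorem exists_descent_of_ne_one (hw : w ≠ 1) : ∃ a, w (a + 1) < w a := by
  by_contra! hc
  exact hw <| eq_one_of_le_apply <| StrictMono.id_le <| strictMono_nat_of_lt_succ fun a =>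
    (hc a).lt_of_ne (w.injective.ne a.succ_ne_self.symm)

theorem lt_of_descent_of_mem_symGroup (hw : w ∈ symGroup m) {a : ℕ} (hd : w (a + 1) < w a) :
    a + 1 < m := by
  by_contra! hc
  have h1 := mem_symGroup.1 hw (a + 1) hc
  rcases lt_or_ge a m with ha | ha
  · have := apply_lt_of_mem_symGroup hw ha
    omega
  · have := mem_symGroup.1 hw a ha
    omega

theorem longest_apply (x : ℕ) : longest m x = if x < m then m - 1 - x else x := rfl

theorem longest_mul_self : longest m * longest m = 1 := by
  ext x
  simp only [Perm.mul_apply, longest_apply, Perm.one_apply]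
  split_ifs <;> omega

theorem longest_mul_apply (hw : w ∈ symGroup m) (i : ℕ) :
    (longest m * w) i = if i < m then m - 1 - w i else i := by
  rw [Perm.mul_apply, longest_apply]
  by_cases hi : i < m
  · rw [if_pos (apply_lt_of_mem_symGroup hw hi), if_pos hi]
  · rw [mem_symGroup.1 hw i (not_lt.1 hi), if_neg hi]

theorem eq_longest_of_mul_eq_one (h : longest m * w = 1) : w = longest m :=
  (eq_inv_of_mul_eq_one_right h).trans (inv_eq_of_mul_eq_one_right longest_mul_self)

theorem eq_longest_of_forall_add_lt (hw : w ∈ symGroup m) (h : ∀ i < m, w i + i < m) :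
    w = longest m := by
  refine eq_longest_of_mul_eq_one <| eq_one_of_le_apply fun i => ?_
  rw [longest_mul_apply hw]
  split_ifs with hi
  · have := h i hi
    omega
  · exact le_rfl

theorem eq_longest_of_forall_le_add (hw : w ∈ symGroup m) (h : ∀ i < m, m ≤ w i + i + 1) :
    w = longest m := by
  refine eq_longest_of_mul_eq_one <| eq_one_of_apply_le fun i => ?_
  rw [longest_mul_apply hw]
  split_ifs with hi
  · have := h i hi
    omega
  · exact le_rfl

theorem exists_ascent_of_ne_longest (hw : w ∈ symGroup m) (hne : w ≠ longest m) :
    ∃ i, i + 1 < m ∧ w i < w (i + 1) := by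
  by_contra! hc
  refine hne <| eq_longest_of_forall_add_lt hw fun i hi => ?_
  induction i with
  | zero => simpa using apply_lt_of_mem_symGroup hw hi
  | succ i ih =>
    have := (hc i hi).lt_of_ne (w.injective.ne i.succ_ne_self)
    have := ih (by omega)
    omega

theorem exists_add_add_two_le_of_ne_longest (hw : w ∈ symGroup m) (hne : w ≠ longest m) :
    ∃ i < m, w i + i + 2 ≤ m := by
  by_contra! hc
  exact hne <| eq_longest_of_forall_le_add hw fun i hi => by have := hc i hi; omega

end Permutations

section Length

variable {m a : ℕ} {w : Perm ℕ}

def inversions (w : Perm ℕ) : Set (ℕ × ℕ) := {p | p.1 < p.2 ∧ w p.2 < w p.1}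

theorem ell_eq_ncard_inversions (w : Perm ℕ) : ell w = (inversions w).ncard := rfl

theorem inversions_subset_range_prod (hw : w ∈ symGroup m) :
    inversions w ⊆ ↑(range m ×ˢ range m) := by
  rintro ⟨x, y⟩ ⟨hxy, hyx⟩
  simp only [coe_product, coe_range, Set.mem_prod, Set.mem_Iio]
  by_contra! hc
  have hy : m ≤ y := by omega
  simp only at hxy hyx
  rw [mem_symGroup.1 hw y hy] at hyx
  rcases lt_or_ge x m with hx | hx
  · have := apply_lt_of_mem_symGroup hw hx
    omega
  · rw [mem_symGroup.1 hw x hx] at hyx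
    omega

theorem inversions_finite (hw : w ∈ symGroup m) : (inversions w).Finite :=
  (finite_toSet _).subset (inversions_subset_range_prod hw)

theorem ell_le_mul_self (hw : w ∈ symGroup m) : ell w ≤ m * m := by
  simpa [ell_eq_ncard_inversions] using
    Set.ncard_le_ncard (inversions_subset_range_prod hw) (finite_toSet _)

theorem ell_one : ell 1 = 0 := by
  have : inversions 1 = ∅ := Set.eq_empty_of_forall_notMem fun p hp => by
    simp only [inversions, Perm.one_apply, Set.mem_ofPred_eq] at hp
    omega
  rw [ell_eq_ncard_inversions, this, Set.ncard_empty]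

theorem inversions_mul_swap (h : w a < w (a + 1)) :
    inversions (w * swap a (a + 1)) =
      insert (a, a + 1) (prodCongr (swap a (a + 1)) (swap a (a + 1)) '' inversions w) := by
  ext ⟨x, y⟩
  rw [image_eq_preimage_symm]
  simp only [inversions, Set.mem_insert_iff, Set.mem_preimage, prodCongr_symm, symm_swap,
    prodCongr_apply, Prod.map, Set.mem_ofPred_eq, Perm.mul_apply, Prod.mk.injEq, swap_apply_def]
  split_ifs <;> subst_vars <;> omega

theorem ell_mul_swap_of_lt (hfin : (inversions w).Finite) (h : w a < w (a + 1)) :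
    ell (w * swap a (a + 1)) = ell w + 1 := by
  have hnotMem : (a, a + 1) ∉ prodCongr (swap a (a + 1)) (swap a (a + 1)) '' inversions w := by
    rw [image_eq_preimage_symm]
    simp [inversions]
  rw [ell_eq_ncard_inversions, inversions_mul_swap h, Set.ncard_insert_of_notMem hnotMem
    (hfin.image _), Set.ncard_image_of_injective _ (Equiv.injective _), ell_eq_ncard_inversions]

theorem ell_eq_ell_mul_swap_add_one (hfin : (inversions (w * swap a (a + 1))).Finite)
    (h : w (a + 1) < w a) : ell w = ell (w * swap a (a + 1)) + 1 := by
  have hasc : (w * swap a (a + 1)) a < (w * swap a (a + 1)) (a + 1) := by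
    simpa [Perm.mul_apply] using h
  simpa [mul_swap_mul_self] using ell_mul_swap_of_lt hfin hasc

end Length

section Rank

variable {a : ℕ} {v w u : Perm ℕ}

def cornerCount (v : Perm ℕ) (p q : ℕ) : ℕ := #{i ∈ range p | q ≤ v i}

/-- By Ehresmann's criterion this is the Bruhat order. -/
def RankLE (w u : Perm ℕ) : Prop := ∀ p q, cornerCount w p q ≤ cornerCount u p q

theorem cornerCount_succ (v : Perm ℕ) (p q : ℕ) :
    cornerCount v (p + 1) q = cornerCount v p q + if q ≤ v p then 1 else 0 := by
  simp only [cornerCount, card_filter, sum_range_succ]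

theorem cornerCount_mul_swap {p : ℕ} (v : Perm ℕ) (q : ℕ) (hp : p ≠ a + 1) :
    cornerCount (v * swap a (a + 1)) p q = cornerCount v p q := by
  rw [cornerCount, cornerCount, card_filter, card_filter]
  simp only [Perm.mul_apply]
  rcases le_or_gt p a with hpa | hpa
  · refine sum_congr rfl fun i hi => ?_
    rw [mem_range] at hi
    simp only [swap_apply_of_ne_of_ne (a := a) (b := a + 1) (x := i) (by omega) (by omega)]
  · refine Perm.sum_comp _ _ (fun i => if q ≤ v i then 1 else 0) fun i hi => ?_
    rw [mem_coe, mem_range]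
    by_contra hc
    exact hi (swap_apply_of_ne_of_ne (by omega) (by omega))

theorem RankLE.refl (w : Perm ℕ) : RankLE w w := fun _ _ => le_rfl

theorem RankLE.trans (h₁ : RankLE w v) (h₂ : RankLE v u) : RankLE w u :=
  fun p q => (h₁ p q).trans (h₂ p q)

/-- At an ascent `a` of `w`, the corner counts in column `a + 1` are controlled by those in
columns `a` and `a + 2`. -/
theorem rankLE_of_ascent (hw : w a < w (a + 1))
    (h : ∀ p q, p ≠ a + 1 → cornerCount w p q ≤ cornerCount u p q) : RankLE w u := by
  intro p q
  by_cases hp : p = a + 1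
  · subst hp
    have h₀ := h a q (by omega)
    have h₂ := h (a + 2) q (by omega)
    simp only [cornerCount_succ] at h₂ ⊢
    split_ifs at h₂ ⊢ <;> omega
  · exact h p q hp

theorem RankLE.mul_swap_right (h : RankLE w u) (hw : w a < w (a + 1)) :
    RankLE w (u * swap a (a + 1)) :=
  rankLE_of_ascent hw fun p q hp => cornerCount_mul_swap u q hp ▸ h p q

theorem RankLE.mul_swap (h : RankLE w u) (hw : w (a + 1) < w a) :
    RankLE (w * swap a (a + 1)) (u * swap a (a + 1)) :=
  rankLE_of_ascent (a := a) (by simpa [Perm.mul_apply] using hw) fun p q hp => by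
    rw [cornerCount_mul_swap w q hp, cornerCount_mul_swap u q hp]
    exact h p q

theorem RankLE.eq_one (h : RankLE w 1) : w = 1 := by
  refine eq_one_of_apply_le fun i => ?_
  have hi := h (i + 1) (i + 1)
  have h₁ : cornerCount 1 (i + 1) (i + 1) = 0 := by
    rw [cornerCount, card_eq_zero, filter_eq_empty_iff]
    intro j hj
    simp only [mem_range, Perm.one_apply] at hj ⊢
    omega
  rw [h₁, cornerCount_succ] at hi
  split_ifs at hi <;> omega

end Rank

section Bruhat

variable {m a : ℕ} {w u : Perm ℕ}

theorem wordProd_concat (l : List ℕ) (a : ℕ) :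
    wordProd (l ++ [a]) = wordProd l * swap a (a + 1) := by
  simp [wordProd]

theorem IsReducedWord.concat {l : List ℕ} (hl : IsReducedWord (u * swap a (a + 1)) l)
    (hu : ell u = ell (u * swap a (a + 1)) + 1) : IsReducedWord u (l ++ [a]) :=
  ⟨by rw [wordProd_concat, hl.1, mul_swap_mul_self], by simp [hl.2, hu]⟩

theorem bruhatLE_one : BruhatLE 1 1 :=
  ⟨[], [], ⟨rfl, by simp [ell_one]⟩, ⟨rfl, by simp [ell_one]⟩, List.Sublist.slnil⟩

theorem BruhatLE.of_mul_swap_right (h : BruhatLE w (u * swap a (a + 1)))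
    (hu : ell u = ell (u * swap a (a + 1)) + 1) : BruhatLE w u :=
  let ⟨l, l', hl, hl', hsub⟩ := h
  ⟨l ++ [a], l', IsReducedWord.concat hl hu, hl', hsub.trans (List.sublist_append_left l [a])⟩

theorem BruhatLE.of_mul_swap (h : BruhatLE (w * swap a (a + 1)) (u * swap a (a + 1)))
    (hw : ell w = ell (w * swap a (a + 1)) + 1) (hu : ell u = ell (u * swap a (a + 1)) + 1) :
    BruhatLE w u :=
  let ⟨l, l', hl, hl', hsub⟩ := h
  ⟨l ++ [a], l' ++ [a], IsReducedWord.concat hl hu, IsReducedWord.concat hl' hw,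
    hsub.append (List.Sublist.refl [a])⟩

/-- Peel off a descent `a` of `u`: if `w` has an ascent at `a` it lies below `u s_a`,
otherwise `w s_a` lies below `u s_a`. -/
theorem bruhatLE_of_rankLE {m : ℕ} {w u : Perm ℕ} (hw : w ∈ symGroup m) (hu : u ∈ symGroup m)
    (h : RankLE w u) : BruhatLE w u := by
  by_cases hu₁ : u = 1
  · subst hu₁
    rw [h.eq_one]
    exact bruhatLE_one
  obtain ⟨a, hd⟩ := exists_descent_of_ne_one hu₁
  have ha := swap_mem_symGroup (lt_of_descent_of_mem_symGroup hu hd)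
  have hu' := mul_mem hu ha
  have hlen := ell_eq_ell_mul_swap_add_one (inversions_finite hu') hd
  rcases (w.injective.ne a.succ_ne_self.symm).lt_or_gt with hasc | hdesc
  · exact BruhatLE.of_mul_swap_right (bruhatLE_of_rankLE hw hu' (h.mul_swap_right hasc)) hlen
  · exact BruhatLE.of_mul_swap (bruhatLE_of_rankLE (mul_mem hw ha) hu' (h.mul_swap hdesc))
      (ell_eq_ell_mul_swap_add_one (inversions_finite (mul_mem hw ha)) hdesc) hlen
termination_by ell u
decreasing_by all_goals omega

end Bruhat

section Specialization

variable {S : Perm ℕ → MvPolynomial (ℕ ⊕ ℕ) ℤ} {m i : ℕ} {w u : Perm ℕ}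

noncomputable def specialization (u : Perm ℕ) :
    MvPolynomial (ℕ ⊕ ℕ) ℤ →ₐ[ℤ] MvPolynomial ℕ ℤ :=
  aeval (Sum.elim (fun a => X (u a)) fun b => X b)

theorem specialization_sX (u : Perm ℕ) (i : ℕ) (f : MvPolynomial (ℕ ⊕ ℕ) ℤ) :
    specialization u (sX i f) = specialization (u * swap i (i + 1)) f := by
  rw [specialization, specialization, sX, aeval_rename]
  congr 2
  ext (a | b) <;> rfl

theorem specialization_longest_eq_zero (hS : IsSchubertFamily S) (hu : u ∈ symGroup m)
    (hne : u ≠ longest m) : specialization u (S (longest m)) = 0 := by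
  obtain ⟨i, him, hi⟩ := exists_add_add_two_le_of_ne_longest hu hne
  rw [hS.1 m, map_prod]
  refine prod_eq_zero (mem_range.2 him) ?_
  rw [map_prod]
  refine prod_eq_zero (mem_range.2 (apply_lt_of_mem_symGroup hu him)) ?_
  rw [if_pos (by omega), map_sub]
  simp [specialization]

/-- Specialize `(x_i - x_{i+1}) S_w = S_{w s_i} - s_i S_{w s_i}` at `u`: the action of `s_i` on the
`x`-variables turns the specialization at `u` into the one at `u s_i`. -/
theorem specialization_eq_zero_of_mul_swap (hS : IsSchubertFamily S)
    (hw : FinSupp (w * swap i (i + 1)))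
    (hasc : w i < w (i + 1)) (hu : u i ≠ u (i + 1))
    (h₁ : specialization u (S (w * swap i (i + 1))) = 0)
    (h₂ : specialization (u * swap i (i + 1)) (S (w * swap i (i + 1))) = 0) :
    specialization u (S w) = 0 := by
  have hdesc : (w * swap i (i + 1)) (i + 1) < (w * swap i (i + 1)) i := by
    simpa [Perm.mul_apply] using hasc
  have hrec := (hS.2.1 _ hw i).1 hdesc
  rw [mul_swap_mul_self] at hrec
  have := congrArg (specialization u) hrec
  rw [map_mul, map_sub, map_sub, specialization_sX, h₁, h₂, sub_zero] at this
  simpa [specialization, sub_eq_zero, hu] using this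

theorem specialization_eq_zero_of_not_rankLE {m : ℕ} {w u : Perm ℕ} (hS : IsSchubertFamily S)
    (hw : w ∈ symGroup m) (hu : u ∈ symGroup m) (h : ¬RankLE w u) :
    specialization u (S w) = 0 := by
  by_cases hw₀ : w = longest m
  · subst hw₀
    exact specialization_longest_eq_zero hS hu fun hu₀ => h (hu₀ ▸ RankLE.refl _)
  obtain ⟨i, hi, hasc⟩ := exists_ascent_of_ne_longest hw hw₀
  have hsi := swap_mem_symGroup hi
  have hlen := ell_mul_swap_of_lt (inversions_finite hw) hasc
  have hbound := ell_le_mul_self (mul_mem hw hsi)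
  refine specialization_eq_zero_of_mul_swap hS (finSupp_of_mem_symGroup (mul_mem hw hsi)) hasc
    (u.injective.ne i.succ_ne_self.symm) ?_ ?_
  · exact specialization_eq_zero_of_not_rankLE hS (mul_mem hw hsi) hu
      fun h' => h ((RankLE.refl w).mul_swap_right hasc |>.trans h')
  · refine specialization_eq_zero_of_not_rankLE hS (mul_mem hw hsi) (mul_mem hu hsi)
      fun h' => h ?_
    simpa [mul_swap_mul_self] using h'.mul_swap (a := i) (by simpa [Perm.mul_apply] using hasc)
termination_by m * m - ell w
decreasing_by all_goals omega

end Specialization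

end Schubert

/-- if `w` is not less than or equal to `u` in the Bruhat order on
`S m`, then the specialization `𝔖_w(b_{u 1}, …, b_{u m}; b_1, …, b_m)` of the
double Schubert polynomial vanishes. -/
theorem schubert_specialization_eq_zero
    (S : Equiv.Perm ℕ → MvPolynomial (ℕ ⊕ ℕ) ℤ) (hS : IsSchubertFamily S)
    (m : ℕ) (u w : Equiv.Perm ℕ)
    (hu : ∀ t, m ≤ t → u t = t) (hw : ∀ t, m ≤ t → w t = t)
    (h : ¬BruhatLE w u) :
    aeval (Sum.elim (fun a => (X (u a) : MvPolynomial ℕ ℤ)) (fun b => X b)) (S w)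
      = 0 := by
  have hw' := Schubert.mem_symGroup.2 hw
  have hu' := Schubert.mem_symGroup.2 hu
  exact Schubert.specialization_eq_zero_of_not_rankLE hS hw' hu'
    fun hr => h (Schubert.bruhatLE_of_rankLE hw' hu' hr)
end

section
/- Let u be a permutation in S_m and let b_1,...,b_m be independent variables. Then S_u(b_{u(1)},...,b_{u(m)}; b_1,...,b_m) = product over all pairs i < j with u(i) > u(j) of (b_{u(i)} - b_{u(j)}). -/
open MvPolynomial

/-! Write `ψ_v f = f(b_{v 0}, b_{v 1}, …; b_0, b_1, …)`. Applying `ψ_v` to the divided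
difference relation for an ascent `i` of `w` gives
`(b_{v i} - b_{v (i+1)}) ψ_v(S_w) = ψ_v(S_{w s_i}) - ψ_{v s_i}(S_{w s_i})`.
By descending induction on the length, starting from the longest element where everything
is an explicit product, this shows simultaneously that `ψ_v(S_w) = 0` whenever `v` is
shorter than `w` and that `ψ_w(S_w)` is the product over the inversions of `w`:
at `v = w` the first term on the right vanishes and the second is known. -/

namespace SchubertSpecialization

open Finset
open Equiv (swap)

def InSym (m : ℕ) (w : Equiv.Perm ℕ) : Prop := ∀ t, m ≤ t → w t = t

namespace InSym

variable {m : ℕ} {w : Equiv.Perm ℕ}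

lemma finSupp (hw : InSym m w) : FinSupp w :=
  (Set.finite_Iio m).subset fun x hx => not_le.1 fun h => hx (hw x h)

lemma inv (hw : InSym m w) : InSym m w⁻¹ :=
  fun t ht => Equiv.Perm.inv_eq_iff_eq.2 (hw t ht).symm

lemma apply_lt (hw : InSym m w) {i : ℕ} (hi : i < m) : w i < m := by
  by_contra! h
  have := w.injective (hw _ h)
  omega

lemma mul_swap (hw : InSym m w) {i : ℕ} (hi : i + 1 < m) :
    InSym m (w * swap i (i + 1)) := fun t ht => by
  rw [Equiv.Perm.mul_apply, Equiv.swap_apply_of_ne_of_ne (by omega) (by omega), hw t ht]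

lemma sum_range_apply (hw : InSym m w) : ∑ i ∈ range m, w i = ∑ i ∈ range m, i :=
  sum_nbij' w ⇑w⁻¹ (fun _ hi => mem_range.2 (hw.apply_lt (mem_range.1 hi)))
    (fun _ hi => mem_range.2 (hw.inv.apply_lt (mem_range.1 hi)))
    (fun i _ => w.symm_apply_apply i) (fun i _ => w.apply_symm_apply i) fun _ _ => rfl

/-- A permutation of `{0, …, m-1}` bounded below by the longest element is the longest
element, since both have the same sum of values. -/
lemma eq_longest_of_le (hw : InSym m w) (h : ∀ i < m, m - 1 - i ≤ w i) : w = longest m := by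
  have hsum : ∑ i ∈ range m, (m - 1 - i) = ∑ i ∈ range m, w i := by
    rw [hw.sum_range_apply]; exact sum_range_reflect id m
  have heq := (sum_eq_sum_iff_of_le fun i hi => h i (mem_range.1 hi)).1 hsum
  ext i
  rcases lt_or_ge i m with hi | hi
  · simp [longest, hi, heq i (mem_range.2 hi)]
  · simp [longest, not_lt.2 hi, hw i hi]

lemma exists_ascent_of_ne_longest (hw : InSym m w) (hne : w ≠ longest m) :
    ∃ i, i + 1 < m ∧ w i < w (i + 1) := by
  by_contra! hdesc
  have hdrop : ∀ d i, i + d < m → w (i + d) + d ≤ w i := by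
    intro d
    induction d with
    | zero => simp
    | succ d ih =>
      intro i hi
      have h1 := ih (i + 1) (by omega)
      have h2 : w (i + 1) ≠ w i := fun he => by have := w.injective he; omega
      have h3 := hdesc i (by omega)
      rw [show i + 1 + d = i + (d + 1) by omega] at h1
      omega
  exact hne (hw.eq_longest_of_le fun i hi => by have := hdrop (m - 1 - i) i (by omega); omega)

end InSym

def inversions (m : ℕ) (w : Equiv.Perm ℕ) : Finset (ℕ × ℕ) :=
  (range m ×ˢ range m).filter fun p => p.1 < p.2 ∧ w p.2 < w p.1

lemma mem_inversions {m : ℕ} {w : Equiv.Perm ℕ} {p : ℕ × ℕ} :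
    p ∈ inversions m w ↔ p.1 < m ∧ p.2 < m ∧ p.1 < p.2 ∧ w p.2 < w p.1 := by
  simp only [inversions, mem_filter, mem_product, mem_range, and_assoc]

lemma card_inversions_le (m : ℕ) (w : Equiv.Perm ℕ) : #(inversions m w) ≤ m * m :=
  (card_filter_le _ _).trans (by simp)

section MulSwap

variable {m i : ℕ} {w : Equiv.Perm ℕ}

lemma inversions_mul_swap (hi : i + 1 < m) (hasc : w i < w (i + 1)) :
    inversions m (w * swap i (i + 1)) = insert (i, i + 1)
      ((inversions m w).map ((swap i (i + 1)).prodCongr (swap i (i + 1))).toEmbedding) := by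
  ext ⟨c, d⟩
  simp only [mem_insert, mem_map_equiv, mem_inversions, Prod.mk.injEq, Equiv.prodCongr_symm,
    Equiv.symm_swap, Equiv.prodCongr_apply, Prod.map, Equiv.Perm.mul_apply]
  rw [Equiv.swap_apply_def, Equiv.swap_apply_def]
  split_ifs <;> subst_vars <;> omega

lemma pair_notMem_map_inversions :
    (i, i + 1) ∉
      (inversions m w).map ((swap i (i + 1)).prodCongr (swap i (i + 1))).toEmbedding := by
  simp [mem_map_equiv, mem_inversions]

lemma card_inversions_mul_swap (hi : i + 1 < m) (hasc : w i < w (i + 1)) :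
    #(inversions m (w * swap i (i + 1))) = #(inversions m w) + 1 := by
  rw [inversions_mul_swap hi hasc, card_insert_of_notMem pair_notMem_map_inversions, card_map]

lemma card_inversions_mul_swap_le (hi : i + 1 < m) :
    #(inversions m (w * swap i (i + 1))) ≤ #(inversions m w) + 1 := by
  rcases lt_or_gt_of_ne (w.injective.ne (show i ≠ i + 1 by omega)) with hasc | hdesc
  · exact (card_inversions_mul_swap hi hasc).le
  · have := card_inversions_mul_swap (w := w * swap i (i + 1)) hi (by simpa using hdesc)
    rw [mul_assoc, Equiv.swap_mul_self, mul_one] at this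
    omega

noncomputable def inversionProd (m : ℕ) (w : Equiv.Perm ℕ) : MvPolynomial ℕ ℤ :=
  ∏ p ∈ inversions m w, (X (w p.1) - X (w p.2))

lemma inversionProd_mul_swap (hi : i + 1 < m) (hasc : w i < w (i + 1)) :
    inversionProd m (w * swap i (i + 1)) = (X (w (i + 1)) - X (w i)) * inversionProd m w := by
  rw [inversionProd, inversions_mul_swap hi hasc, prod_insert pair_notMem_map_inversions, prod_map]
  simp [inversionProd, Equiv.Perm.mul_apply]

end MulSwap

noncomputable def evalPerm (v : Equiv.Perm ℕ) : MvPolynomial (ℕ ⊕ ℕ) ℤ →ₐ[ℤ] MvPolynomial ℕ ℤ :=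
  aeval (Sum.elim (fun a => X (v a)) X)

@[simp]
lemma evalPerm_X_inl (v : Equiv.Perm ℕ) (a : ℕ) : evalPerm v (X (Sum.inl a)) = X (v a) := by
  simp [evalPerm]

lemma evalPerm_sX (v : Equiv.Perm ℕ) (i : ℕ) (f : MvPolynomial (ℕ ⊕ ℕ) ℤ) :
    evalPerm v (sX i f) = evalPerm (v * swap i (i + 1)) f := by
  rw [evalPerm, sX, aeval_rename]
  congr 2
  ext (a | b) <;> simp

def VanishesOnShorter (S : Equiv.Perm ℕ → MvPolynomial (ℕ ⊕ ℕ) ℤ) (m : ℕ)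
    (w : Equiv.Perm ℕ) : Prop :=
  ∀ v, InSym m v → #(inversions m v) < #(inversions m w) → evalPerm v (S w) = 0

section Schubert

variable {S : Equiv.Perm ℕ → MvPolynomial (ℕ ⊕ ℕ) ℤ}

lemma X_sub_X_mul_evalPerm (hS : IsSchubertFamily S) {w : Equiv.Perm ℕ} {i : ℕ}
    (hw : FinSupp (w * swap i (i + 1))) (hasc : w i < w (i + 1)) (v : Equiv.Perm ℕ) :
    (X (v i) - X (v (i + 1))) * evalPerm v (S w) =
      evalPerm v (S (w * swap i (i + 1))) -
        evalPerm (v * swap i (i + 1)) (S (w * swap i (i + 1))) := by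
  have hdesc : (w * swap i (i + 1)) (i + 1) < (w * swap i (i + 1)) i := by
    simpa [Equiv.Perm.mul_apply] using hasc
  have h := congrArg (evalPerm v) ((hS.2.1 _ hw i).1 hdesc)
  rwa [Equiv.mul_swap_mul_self, map_mul, map_sub, map_sub, evalPerm_sX, evalPerm_X_inl,
    evalPerm_X_inl] at h

lemma evalPerm_longest (hS : IsSchubertFamily S) (m : ℕ) (v : Equiv.Perm ℕ) :
    evalPerm v (S (longest m)) =
      ∏ i ∈ range m, ∏ j ∈ range m, if i + j + 2 ≤ m then X (v i) - X j else 1 := by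
  simp [hS.1 m, map_prod, apply_ite, evalPerm]

lemma evalPerm_longest_eq_zero (hS : IsSchubertFamily S) {m : ℕ} {v : Equiv.Perm ℕ}
    (hv : InSym m v) (hne : v ≠ longest m) : evalPerm v (S (longest m)) = 0 := by
  obtain ⟨i, hi, hvi⟩ : ∃ i < m, v i < m - 1 - i := by
    by_contra! h
    exact hne (hv.eq_longest_of_le h)
  rw [evalPerm_longest hS]
  refine prod_eq_zero (mem_range.2 hi) (prod_eq_zero (mem_range.2 (hv.apply_lt hi)) ?_)
  rw [if_pos (by omega), sub_self]

lemma evalPerm_longest_self (hS : IsSchubertFamily S) (m : ℕ) :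
    evalPerm (longest m) (S (longest m)) = inversionProd m (longest m) := by
  rw [evalPerm_longest hS, ← prod_product', ← prod_filter, inversionProd]
  refine prod_nbij' (fun p => (p.1, m - 1 - p.2)) (fun p => (p.1, m - 1 - p.2))
    ?_ ?_ ?_ ?_ fun p hp => ?_
  all_goals simp only [mem_filter, mem_product, mem_range, mem_inversions, longest,
    Equiv.coe_fn_mk, Prod.forall, Prod.mk.injEq, true_and] at *
  iterate 4 · intro a b h; first | omega | split_ifs at * <;> omega
  · rw [if_pos (by omega : m - 1 - p.2 < m), Nat.sub_sub_self (by omega)]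

lemma vanishesOnShorter_of_mul_swap (hS : IsSchubertFamily S) {m i : ℕ} {w : Equiv.Perm ℕ}
    (hw : InSym m w) (hi : i + 1 < m) (hasc : w i < w (i + 1))
    (hvan : VanishesOnShorter S m (w * swap i (i + 1))) : VanishesOnShorter S m w := by
  intro v hv hlt
  have hw' := card_inversions_mul_swap hi hasc
  have hv' := card_inversions_mul_swap_le (w := v) hi
  have key := X_sub_X_mul_evalPerm hS (hw.mul_swap hi).finSupp hasc v
  rw [hvan v hv (by omega), hvan _ (hv.mul_swap hi) (by omega), sub_zero] at key
  refine (mul_eq_zero.1 key).resolve_left (sub_ne_zero.2 (X_injective.ne (v.injective.ne ?_)))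
  omega

lemma evalPerm_self_of_mul_swap (hS : IsSchubertFamily S) {m i : ℕ} {w : Equiv.Perm ℕ}
    (hw : InSym m w) (hi : i + 1 < m) (hasc : w i < w (i + 1))
    (hvan : VanishesOnShorter S m (w * swap i (i + 1)))
    (hself : evalPerm (w * swap i (i + 1)) (S (w * swap i (i + 1))) =
      inversionProd m (w * swap i (i + 1))) :
    evalPerm w (S w) = inversionProd m w := by
  have key := X_sub_X_mul_evalPerm hS (hw.mul_swap hi).finSupp hasc w
  rw [hvan w hw (by rw [card_inversions_mul_swap hi hasc]; omega), hself,
    inversionProd_mul_swap hi hasc, zero_sub, ← neg_mul, neg_sub] at key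
  exact mul_left_cancel₀ (sub_ne_zero.2 (X_injective.ne (ne_of_lt hasc))) key

theorem evalPerm_schubert (hS : IsSchubertFamily S) {m : ℕ} {w : Equiv.Perm ℕ} (hw : InSym m w) :
    VanishesOnShorter S m w ∧ evalPerm w (S w) = inversionProd m w := by
  by_cases hL : w = longest m
  · subst hL
    exact ⟨fun v hv hlt => evalPerm_longest_eq_zero hS hv (by rintro rfl; exact hlt.false),
      evalPerm_longest_self hS m⟩
  obtain ⟨i, hi, hasc⟩ := hw.exists_ascent_of_ne_longest hL
  have ih := evalPerm_schubert hS (hw.mul_swap hi)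
  exact ⟨vanishesOnShorter_of_mul_swap hS hw hi hasc ih.1,
    evalPerm_self_of_mul_swap hS hw hi hasc ih.1 ih.2⟩
termination_by m * m - #(inversions m w)
decreasing_by
  have := card_inversions_le m (w * swap i (i + 1))
  have := card_inversions_mul_swap hi hasc
  omega

end Schubert

end SchubertSpecialization

/-- `𝔖_u(b_{u 1}, …, b_{u m}; b_1, …, b_m)` equals the product of
`(b_{u i} - b_{u j})` over all pairs `i < j` (in `{1, …, m}`, 0-indexed below)
with `u i > u j`. -/
theorem schubert_specialization_diagonal
    (S : Equiv.Perm ℕ → MvPolynomial (ℕ ⊕ ℕ) ℤ) (hS : IsSchubertFamily S)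
    (m : ℕ) (u : Equiv.Perm ℕ) (hu : ∀ t, m ≤ t → u t = t) :
    aeval (Sum.elim (fun a => (X (u a) : MvPolynomial ℕ ℤ)) (fun b => X b)) (S u) =
      ∏ p ∈ (Finset.range m ×ˢ Finset.range m).filter
          (fun p => p.1 < p.2 ∧ u p.2 < u p.1),
        (X (u p.1) - X (u p.2) : MvPolynomial ℕ ℤ) :=
  (SchubertSpecialization.evalPerm_schubert hS (m := m) hu).2
end
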